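/- arXiv:1812.00069 — 3 statements merged into one kernel-verified Lean document; each statement's English description precedes it below -/
import Mathlib

section
/- Let g be an automorphism of the binary rooted tree acting transitively on each level. Then for every word w of length n and every letter a ∈ {0,1}, g^{2^n}|_w(a) ≠ a. -/
def IsEndo {X : Type*} (f : List X → List X) : Prop :=
  (∀ w, (f w).length = w.length) ∧ ∀ w a, ∃ b, f (w ++ [a]) = f w ++ [b]

def sec {X : Type*} (g : List X → List X) (w v : List X) : List X :=
  (g (w ++ v)).drop w.length

theorem iter_len {g : List Bool → List Bool} (hg : IsEndo g) (k : ℕ) (w : List Bool) :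
    (g^[k] w).length = w.length := by
  induction k with
  | zero => simp
  | succ n ih => rw [Function.iterate_succ_apply', hg.1, ih]

theorem iter_endo {g : List Bool → List Bool} (hg : IsEndo g) (k : ℕ) (w : List Bool)
    (a : Bool) : ∃ b, g^[k] (w ++ [a]) = g^[k] w ++ [b] := by
  induction k generalizing a with
  | zero => exact ⟨a, rfl⟩
  | succ n ih =>
    obtain ⟨b, hb⟩ := ih a
    obtain ⟨c, hc⟩ := hg.2 (g^[n] w) b
    exact ⟨c, by rw [Function.iterate_succ_apply', hb, hc, Function.iterate_succ_apply']⟩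

theorem min_per {g : List Bool → List Bool} (hg : IsEndo g) (hbij : Function.Bijective g)
    (htrans : ∀ u v : List Bool, u.length = v.length → ∃ k, g^[k] u = v)
    (w : List Bool) : Function.minimalPeriod g w = 2 ^ w.length := by
  set n := w.length with hn
  letI : Fintype {v : List Bool // v.length = n} :=
    inferInstanceAs (Fintype (List.Vector Bool n))
  -- w is a periodic point
  have hper : w ∈ Function.periodicPts g := by
    obtain ⟨i, j, hne, hij⟩ := Finite.exists_ne_map_eq_of_infinite
      (fun k : ℕ => (⟨g^[k] w, iter_len hg k w⟩ : {v : List Bool // v.length = n}))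
    simp only [Subtype.mk.injEq] at hij
    rcases hne.lt_or_gt with h | h
    · refine ⟨j - i, by omega, ?_⟩
      have : g^[i] (g^[j - i] w) = g^[i] w := by
        rw [← Function.iterate_add_apply]
        rw [show i + (j - i) = j by omega, hij]
      exact (Function.Bijective.iterate hbij i).injective this
    · refine ⟨i - j, by omega, ?_⟩
      have : g^[j] (g^[i - j] w) = g^[j] w := by
        rw [← Function.iterate_add_apply]
        rw [show j + (i - j) = i by omega, ← hij]
      exact (Function.Bijective.iterate hbij j).injective this
  have hpos : 0 < Function.minimalPeriod g w :=
    Function.minimalPeriod_pos_of_mem_periodicPts hper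
  -- bijection Fin P ≃ level n
  have hbij2 : Function.Bijective (fun k : Fin (Function.minimalPeriod g w) =>
      (⟨g^[k] w, iter_len hg k w⟩ : {v : List Bool // v.length = n})) := by
    constructor
    · intro i j hij
      simp only [Subtype.mk.injEq] at hij
      exact Fin.ext (Function.iterate_injOn_Iio_minimalPeriod i.2 j.2 hij)
    · rintro ⟨v, hv⟩
      obtain ⟨k, hk⟩ := htrans w v hv.symm
      refine ⟨⟨k % Function.minimalPeriod g w, Nat.mod_lt _ hpos⟩, ?_⟩
      simp only [Subtype.mk.injEq]
      rw [Function.iterate_mod_minimalPeriod_eq, hk]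
  have hcard := Fintype.card_of_bijective hbij2
  rw [Fintype.card_fin] at hcard
  have hcv : Fintype.card {v : List Bool // v.length = n} = 2 ^ n := by
    have := card_vector (α := Bool) n
    rwa [Fintype.card_bool] at this
  rw [hcard, hcv]

/-- If `g` is a level-transitive automorphism of the binary tree, then for every word `w`
of length `n` and letter `a`, `g^{2^n}|_w(a) ≠ a`. -/
theorem stmt4 (g : List Bool → List Bool) (hg : IsEndo g) (hbij : Function.Bijective g)
    (htrans : ∀ u v : List Bool, u.length = v.length → ∃ k, g^[k] u = v)
    (w : List Bool) (a : Bool) :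
    sec (g^[2 ^ w.length]) w [a] ≠ [a] := by
  have hfix : g^[2 ^ w.length] w = w := by
    have := Function.iterate_minimalPeriod (f := g) (x := w)
    rwa [min_per hg hbij htrans w] at this
  have hmove : g^[2 ^ w.length] (w ++ [a]) ≠ w ++ [a] := by
    intro h
    have hppt : Function.IsPeriodicPt g (2 ^ w.length) (w ++ [a]) := h
    have hdvd := Function.IsPeriodicPt.minimalPeriod_dvd hppt
    rw [min_per hg hbij htrans (w ++ [a])] at hdvd
    simp only [List.length_append, List.length_singleton] at hdvd
    have hle := Nat.le_of_dvd (by positivity) hdvd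
    have h2 : 2 ^ w.length < 2 ^ (w.length + 1) :=
      Nat.pow_lt_pow_right one_lt_two (Nat.lt_succ_self _)
    omega
  obtain ⟨b, hb⟩ := iter_endo hg (2 ^ w.length) w a
  intro h
  rw [sec, hb, hfix] at h
  simp only [List.drop_append_of_le_length le_rfl, List.drop_length, List.nil_append,
    List.cons.injEq] at h
  exact hmove (by rw [hb, hfix, h.1])
end

section
/- Let A be an automorphism of the binary rooted tree given by a finite Mealy automaton, which has bounded activity and acts transitively on all levels. Then the set T_A = { A^n|_w : w a finite word, 0 ≤ n ≤ 2^{|w|} } of sections of powers of A is finite. -/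
open scoped Pointwise
open Finset

theorem Set.Finite.pow {M : Type*} [Monoid M] {S : Set M} (hS : S.Finite) (k : ℕ) :
    (S ^ k).Finite := by
  induction k with
  | zero => simp
  | succ k ih => rw [pow_succ]; exact ih.mul hS

theorem mem_pow_card_filter_ne_one {M : Type*} [Monoid M] [DecidableEq M] {S : Set M}
    {g P : ℕ → M} (hg : ∀ i, g i ∈ S) (h0 : P 0 = 1) (hsucc : ∀ n, P (n + 1) = g n * P n)
    (n : ℕ) : P n ∈ insert 1 S ^ #{i ∈ range n | g i ≠ 1} := by
  induction n with
  | zero => simp [h0]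
  | succ n ih =>
    rw [range_add_one, filter_insert, hsucc]
    by_cases hn : g n = 1
    · simpa [hn] using ih
    · rw [if_pos hn, card_insert_of_notMem (by simp), pow_succ']
      exact Set.mul_mem_mul (Set.mem_insert_of_mem 1 (hg n)) ih

theorem Function.iterate_mem_image_Iio_of_iterate_eq {α : Type*} (f : α → α) (x : α)
    {i j : ℕ} (hij : i < j) (h : f^[i] x = f^[j] x) (k : ℕ) :
    f^[k] x ∈ (fun m => f^[m] x) '' Set.Iio j := by
  induction k using Nat.strong_induction_on with
  | _ k ih =>
    by_cases hk : k < j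
    · exact ⟨k, hk, rfl⟩
    · have : f^[k] x = f^[k - j + i] x := by
        rw [Function.iterate_add_apply, h, ← Function.iterate_add_apply,
          Nat.sub_add_cancel (by omega)]
      rw [this]
      exact ih _ (by omega)

theorem Function.iterate_injOn_Iio_ncard {α : Type*} {f : α → α} {x : α} {s : Set α}
    (hcover : ∀ y ∈ s, ∃ k, f^[k] x = y) :
    Set.InjOn (fun k => f^[k] x) (Set.Iio s.ncard) := by
  intro i hi j hj hij
  by_contra hne
  wlog hlt : i < j generalizing i j
  · exact this hj hi hij.symm (Ne.symm hne) (by omega)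
  have hsub : s ⊆ (fun m => f^[m] x) '' Set.Iio j := by
    rintro y hy
    obtain ⟨k, rfl⟩ := hcover y hy
    exact Function.iterate_mem_image_Iio_of_iterate_eq f x hlt hij k
  have : s.ncard ≤ j := calc
    s.ncard ≤ ((fun m => f^[m] x) '' Set.Iio j).ncard :=
      Set.ncard_le_ncard hsub ((Set.finite_Iio j).image _)
    _ ≤ (Set.Iio j).ncard := Set.ncard_image_le (Set.finite_Iio j)
    _ = j := by simp
  exact absurd (Set.mem_Iio.mp hj) (not_lt.mpr this)

theorem ncard_length_eq (X : Type*) [Fintype X] (m : ℕ) :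
    {v : List X | v.length = m}.ncard = Fintype.card X ^ m := by
  rw [← Nat.card_coe_set_eq]
  change Nat.card (List.Vector X m) = _
  rw [Nat.card_eq_fintype_card, card_vector]

namespace IsEndo

variable {X : Type*} {f g : List X → List X}

theorem prefix_apply_append (hg : IsEndo g) (w v : List X) : g w <+: g (w ++ v) := by
  induction v using List.reverseRecOn with
  | nil => simp
  | append_singleton v a ih =>
    obtain ⟨b, hb⟩ := hg.2 (w ++ v) a
    rw [← List.append_assoc, hb]
    exact ih.trans (List.prefix_append _ _)

theorem apply_append (hg : IsEndo g) (w v : List X) : g (w ++ v) = g w ++ sec g w v := by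
  rw [sec, ← hg.1 w]
  exact (List.prefix_iff_eq_append.mp (hg.prefix_apply_append w v)).symm

protected theorem id : IsEndo (id : List X → List X) :=
  ⟨fun _ => rfl, fun _ a => ⟨a, rfl⟩⟩

protected theorem comp (hf : IsEndo f) (hg : IsEndo g) : IsEndo (f ∘ g) := by
  refine ⟨fun w => by rw [Function.comp_apply, hf.1, hg.1], fun w a => ?_⟩
  obtain ⟨b, hb⟩ := hg.2 w a
  obtain ⟨b', hb'⟩ := hf.2 (g w) b
  exact ⟨b', by rw [Function.comp_apply, hb, hb', Function.comp_apply]⟩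

protected theorem iterate (hf : IsEndo f) (n : ℕ) : IsEndo f^[n] := by
  induction n with
  | zero => exact IsEndo.id
  | succ n ih => rw [Function.iterate_succ']; exact hf.comp ih

theorem sec_comp (hf : IsEndo f) (hg : IsEndo g) (w : List X) :
    sec (f ∘ g) w = sec f (g w) ∘ sec g w := by
  funext v
  have hlen : (f (g w)).length = w.length := by rw [hf.1, hg.1]
  change (f (g (w ++ v))).drop w.length = _
  rw [hg.apply_append, hf.apply_append, List.drop_left' hlen]
  rfl

theorem sec_iterate_succ (hf : IsEndo f) (n : ℕ) (w : List X) :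
    sec f^[n + 1] w = sec f (f^[n] w) ∘ sec f^[n] w := by
  rw [Function.iterate_succ', hf.sec_comp (hf.iterate n)]

end IsEndo

theorem sec_id {X : Type*} (w : List X) : sec id w = id :=
  funext fun _ => List.drop_left

theorem card_active_orbit_le {X : Type*} [Fintype X] [DecidableEq (List X → List X)]
    {A : List X → List X} (hA : IsEndo A)
    (htrans : ∀ u v : List X, u.length = v.length → ∃ k, A^[k] u = v)
    {w : List X} {n : ℕ} (hn : n ≤ Fintype.card X ^ w.length) :
    #{i ∈ range n | sec A (A^[i] w) ≠ id} ≤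
      {v : List X | v.length = w.length ∧ sec A v ≠ id}.ncard := by
  have hinj : Set.InjOn (fun k => A^[k] w) (Set.Iio (Fintype.card X ^ w.length)) := by
    rw [← ncard_length_eq X w.length]
    exact Function.iterate_injOn_Iio_ncard fun v hv => htrans w v hv.symm
  rw [← Set.ncard_coe_finset]
  refine Set.ncard_le_ncard_of_injOn (fun k => A^[k] w) ?_ ?_
    ((List.finite_length_eq X w.length).subset fun v hv => hv.1)
  · intro i hi
    exact ⟨(hA.iterate i).1 w, (mem_filter.mp hi).2⟩
  · refine hinj.mono fun i hi => ?_
    exact (mem_range.mp (mem_filter.mp hi).1).trans_le hn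

theorem stmt5_general (A : List Bool → List Bool) (hA : IsEndo A)
    (hfs : {f | ∃ w : List Bool, f = sec A w}.Finite)
    (hbdd : ∃ c : ℕ, ∀ n : ℕ,
      Set.ncard {w : List Bool | w.length = n ∧ sec A w ≠ id} < c)
    (htrans : ∀ u v : List Bool, u.length = v.length → ∃ k, A^[k] u = v) :
    {f | ∃ (w : List Bool) (n : ℕ), n ≤ 2 ^ w.length ∧ f = sec (A^[n]) w}.Finite := by
  classical
  obtain ⟨c, hc⟩ := hbdd
  -- in `Function.End` composition is the monoid product, so `insert 1 S ^ c` is the set of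
  -- compositions of at most `c` sections of `A`
  let S : Set (Function.End (List Bool)) := {f | ∃ w : List Bool, f = sec A w}
  have hT : (insert 1 S).Finite := Set.finite_insert.mpr hfs
  refine (hT.pow c).subset ?_
  rintro _ ⟨w, n, hn, rfl⟩
  have hprod := mem_pow_card_filter_ne_one (S := S) (g := fun i => sec A (A^[i] w))
    (P := fun n => sec A^[n] w) (fun i => ⟨A^[i] w, rfl⟩) (sec_id w)
    (fun n => hA.sec_iterate_succ n w) n
  have hcount := card_active_orbit_le hA htrans (n := n) (by simpa using hn)
  exact Set.pow_subset_pow_right (Set.mem_insert 1 S) (hcount.trans (hc _).le) hprod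

/-- For a finite-state (given by a finite Mealy automaton), bounded-activity,
level-transitive automorphism `A` of the binary tree, the set
`T_A = { A^n|_w : w ∈ X*, n ≤ 2^{|w|} }` is finite. -/
theorem stmt5 (A : List Bool → List Bool) (hA : IsEndo A) (hbij : Function.Bijective A)
    (hfs : {f | ∃ w : List Bool, f = sec A w}.Finite)
    (hbdd : ∃ c : ℕ, ∀ n : ℕ,
      Set.ncard {w : List Bool | w.length = n ∧ sec A w ≠ id} < c)
    (htrans : ∀ u v : List Bool, u.length = v.length → ∃ k, A^[k] u = v) :
    {f | ∃ (w : List Bool) (n : ℕ), n ≤ 2 ^ w.length ∧ f = sec (A^[n]) w}.Finite :=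
  stmt5_general A hA hfs hbdd htrans
end

section
/- Let A be a level-transitive bounded-activity automorphism of the binary tree and B an invertible finite automaton endomorphism. Then Exp_A(Log_A(B)) = B as endomorphisms of the tree. Moreover Exp_A is injective: if Exp_A(B_1) = Exp_A(B_2) for two tree endomorphisms B_1, B_2, then B_1 = B_2. -/
/-- `ψ(w) = ∑ w_i 2^i`: the integer encoded by a binary word
(least significant bit first). -/
def wordToNat {d : ℕ} (w : List (Fin d)) : ℕ :=
  w.foldr (fun a acc => a.val + d * acc) 0

lemma iter_len_s17 {A : List (Fin 2) → List (Fin 2)} (h : ∀ w, (A w).length = w.length) :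
    ∀ k w, (A^[k] w).length = w.length := by
  intro k
  induction k with
  | zero => simp
  | succ n ih => intro w; rw [Function.iterate_succ_apply]; rw [ih, h]

lemma wtn_lt : ∀ w : List (Fin 2), wordToNat w < 2 ^ w.length := by
  intro w
  induction w with
  | nil => simp [wordToNat]
  | cons a t ih =>
    simp only [wordToNat, List.foldr] at *
    have := a.isLt
    simp [List.length, pow_succ]
    omega

lemma wtn_inj : ∀ v w : List (Fin 2), v.length = w.length → wordToNat v = wordToNat w → v = w := by
  intro v
  induction v with
  | nil => intro w h _; exact (List.length_eq_zero_iff.mp h.symm).symm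
  | cons a t ih =>
    intro w hlen heq
    cases w with
    | nil => simp at hlen
    | cons b s =>
      simp only [wordToNat, List.foldr] at heq
      have ha := a.isLt; have hb := b.isLt
      have h1 : a.val = b.val := by omega
      have h2 : t.foldr (fun a acc => a.val + 2 * acc) 0 =
          s.foldr (fun a acc => a.val + 2 * acc) 0 := by omega
      simp at hlen
      have := ih s hlen h2
      rw [this, Fin.ext h1]

lemma wtn_surj : ∀ (n i : ℕ), i < 2 ^ n → ∃ w : List (Fin 2), w.length = n ∧ wordToNat w = i := by
  intro n
  induction n with
  | zero => intro i hi; exact ⟨[], rfl, by simp [wordToNat]; omega⟩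
  | succ m ih =>
    intro i hi
    obtain ⟨w, hw, hv⟩ := ih (i / 2) (by rw [pow_succ] at hi; omega)
    refine ⟨⟨i % 2, by omega⟩ :: w, by simp [hw], ?_⟩
    simp only [wordToNat, List.foldr] at *
    rw [hv]; omega

lemma iter_period {A : List (Fin 2) → List (Fin 2)} {x : List (Fin 2)} {m : ℕ}
    (hx : A^[m] x = x) : ∀ q r, A^[q * m + r] x = A^[r] x := by
  intro q
  induction q with
  | zero => simp
  | succ p ih =>
    intro r
    have : (p + 1) * m + r = (p * m + r) + m := by ring
    rw [this, Function.iterate_add_apply, hx, ih]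

lemma period_ge {A : List (Fin 2) → List (Fin 2)} (hAl : ∀ w, (A w).length = w.length)
    (htrans : ∀ u v : List (Fin 2), u.length = v.length → ∃ k, A^[k] u = v)
    {x : List (Fin 2)} {m : ℕ} (hm : 0 < m) (hx : A^[m] x = x) :
    2 ^ x.length ≤ m := by
  have hsurj : Function.Surjective (fun j : Fin m =>
      (⟨wordToNat (A^[j.val] x), by
        have := wtn_lt (A^[j.val] x); rwa [iter_len_s17 hAl] at this⟩ : Fin (2 ^ x.length))) := by
    rintro ⟨i, hi⟩
    obtain ⟨w, hwlen, hwv⟩ := wtn_surj x.length i hi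
    obtain ⟨k, hk⟩ := htrans x w hwlen.symm
    refine ⟨⟨k % m, Nat.mod_lt _ hm⟩, ?_⟩
    have : A^[k % m] x = A^[k] x := by
      conv_rhs => rw [← Nat.div_add_mod k m, Nat.mul_comm]
      rw [iter_period hx]
    simp only [this, hk, hwv]
  simpa using Fintype.card_le_of_surjective _ hsurj

lemma exp_inj (A : List (Fin 2) → List (Fin 2))
    (hA : IsEndo A)
    (htrans : ∀ u v : List (Fin 2), u.length = v.length → ∃ k, A^[k] u = v) :
      ∀ B₁ B₂ : List (Fin 2) → List (Fin 2), IsEndo B₁ → IsEndo B₂ →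
        (fun w => A^[wordToNat (B₁ w)] w) = (fun w => A^[wordToNat (B₂ w)] w) →
        B₁ = B₂ := by
  intro B₁ B₂ h₁ h₂ heq
  funext w
  have key : ∀ k₁ k₂ : ℕ, k₁ < 2 ^ w.length → k₂ < 2 ^ w.length →
      A^[k₁] w = A^[k₂] w → k₁ = k₂ := by
    have sym : ∀ k₁ k₂ : ℕ, k₁ ≤ k₂ → k₁ < 2 ^ w.length → k₂ < 2 ^ w.length →
        A^[k₁] w = A^[k₂] w → k₁ = k₂ := by
      intro k₁ k₂ hle h1 h2 he
      by_contra hne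
      have hpos : 0 < k₂ - k₁ := by omega
      have hx : A^[k₂ - k₁] (A^[k₁] w) = A^[k₁] w := by
        rw [← Function.iterate_add_apply, Nat.sub_add_cancel hle, ← he]
      have := period_ge hA.1 htrans hpos hx
      rw [iter_len_s17 hA.1] at this
      omega
    intro k₁ k₂ h1 h2 he
    rcases le_total k₁ k₂ with h | h
    · exact sym _ _ h h1 h2 he
    · exact (sym _ _ h h2 h1 he.symm).symm
  have hkv : wordToNat (B₁ w) = wordToNat (B₂ w) := by
    apply key
    · have := wtn_lt (B₁ w); rwa [h₁.1] at this
    · have := wtn_lt (B₂ w); rwa [h₂.1] at this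
    · exact congrFun heq w
  exact wtn_inj _ _ (by rw [h₁.1, h₂.1]) hkv

/-- `Exp_A(Log_A(B)) = B`, and `Exp_A` is injective on tree endomorphisms.
Here `L = Log_A(B)` is encoded by: `L w` is a word of length `|w|` with
`A^{ψ(L w)}(w) = B(w)`, and `Exp_A(C)(w) = A^{ψ(C(w))}(w)`. -/
theorem stmt17 (A B L : List (Fin 2) → List (Fin 2))
    (hA : IsEndo A) (hAbij : Function.Bijective A)
    (htrans : ∀ u v : List (Fin 2), u.length = v.length → ∃ k, A^[k] u = v)
    (hbdd : ∃ c : ℕ, ∀ n : ℕ,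
      Set.ncard {w : List (Fin 2) | w.length = n ∧ sec A w ≠ id} < c)
    (hB : IsEndo B) (hBbij : Function.Bijective B)
    (hBfs : {f | ∃ w : List (Fin 2), f = sec B w}.Finite)
    (hLlen : ∀ w, (L w).length = w.length)
    (hLspec : ∀ w, A^[wordToNat (L w)] w = B w) :
    (fun w => A^[wordToNat (L w)] w) = B ∧
      ∀ B₁ B₂ : List (Fin 2) → List (Fin 2), IsEndo B₁ → IsEndo B₂ →
        (fun w => A^[wordToNat (B₁ w)] w) = (fun w => A^[wordToNat (B₂ w)] w) →
        B₁ = B₂ := by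
  exact ⟨funext hLspec, exp_inj A hA htrans⟩
end
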